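/- Assume K has characteristic 0 and let r ≥ 1 be an integer. With the hyperplane-section setup (points P_1, …, P_n in the hyperplane H: x_0 = 0 of P^{N+1}, with I their radical ideal in K[x_1, …, x_{N+1}] and Î their radical ideal in K[x_0, …, x_{N+1}]): if I^{(rN)} ⊆ M^{r(N−1)} I^r, then Î^{(r(N+1))} ⊆ M̂^{rN} Î^r. -/

import Mathlib

open MvPolynomial

noncomputable section

/-- The ideal generated by all homogeneous forms vanishing at the point with
coordinate vector `p`. -/
def homVanishingIdeal {K σ : Type*} [Field K] (p : σ → K) : Ideal (MvPolynomial σ K) :=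
  Ideal.span {F : MvPolynomial σ K | (∃ d, F.IsHomogeneous d) ∧ MvPolynomial.eval p F = 0}

/-- The `m`-th symbolic power of the radical ideal of the finite set of points
with coordinate vectors `P i`: the intersection of the `m`-th powers of the
ideals of the individual points. -/
def symbPow {K σ ι : Type*} [Field K] (P : ι → σ → K) (m : ℕ) : Ideal (MvPolynomial σ K) :=
  ⨅ i, homVanishingIdeal (P i) ^ m

/-- The irrelevant maximal ideal `M = (x_0, …, x_N)`. -/
def irrel (K σ : Type*) [Field K] : Ideal (MvPolynomial σ K) :=
  Ideal.span (Set.range (MvPolynomial.X : σ → MvPolynomial σ K))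

/-- The coordinate vectors `P i` are nonzero and represent pairwise distinct
points of projective space (no two are proportional). -/
def ProjectivelyDistinct {K σ ι : Type*} [Field K] (P : ι → σ → K) : Prop :=
  (∀ i, P i ≠ 0) ∧ Pairwise fun i j => ∀ c : K, P i ≠ c • P j

/-- `α(J)`: the least degree of a nonzero homogeneous element of `J`. -/
def idealAlpha {K σ : Type*} [Field K] (J : Ideal (MvPolynomial σ K)) : ℕ :=
  sInf {d : ℕ | ∃ F ∈ J, F ≠ 0 ∧ MvPolynomial.IsHomogeneous F d}

/-!
Write `F ∈ Î^{(r(N+1))}` as `∑ₖ x₀ᵏ Fₖ` with `Fₖ ∈ K[x₁, …, x_{N+1}]`. Since every point lies on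
`x₀ = 0`, `Î(Pᵢ) ⊆ (x₀) + I(Pᵢ)`, so `Fₖ ∈ I^{(r(N+1) - k)}`. For `k ≥ r` write
`x₀ᵏ Fₖ = x₀^{k-r} Fₖ · x₀ʳ` with `x₀ ∈ Î` and `Fₖ ∈ M^{r(N+1)-k}`. For `k < r`, Euler's identity
`d • g = ∑ xᵢ ∂ᵢg` together with `∂ᵢ I^{(a+1)} ⊆ I^{(a)}` gives `I^{(a+s)} ⊆ M^s I^{(a)}` in
characteristic zero, hence `Fₖ ∈ M^{r-k} I^{(rN)} ⊆ M^{r-k+r(N-1)} I^r` by hypothesis, and the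
factor `x₀ᵏ ∈ M̂ᵏ` makes up the remaining degree.
-/

namespace Polynomial

variable {A : Type*} [CommRing A]

def coeffPowIdeal (J : Ideal A) (m : ℕ) : Ideal A[X] where
  carrier := {p | ∀ k, p.coeff k ∈ J ^ (m - k)}
  zero_mem' _ := by simp
  add_mem' hp hq k := by rw [coeff_add]; exact add_mem (hp k) (hq k)
  smul_mem' c p hp k := by
    rw [smul_eq_mul, coeff_mul]
    refine sum_mem fun x hx => Ideal.mul_mem_left _ _ (Ideal.pow_le_pow_right ?_ (hp x.2))
    have := Finset.HasAntidiagonal.mem_antidiagonal.mp hx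
    omega

lemma coeffPowIdeal_mul_le (J : Ideal A) (a b : ℕ) :
    coeffPowIdeal J a * coeffPowIdeal J b ≤ coeffPowIdeal J (a + b) := by
  refine Ideal.mul_le.mpr fun p hp q hq k => ?_
  rw [coeff_mul]
  refine sum_mem fun x hx => ?_
  have hx := Finset.HasAntidiagonal.mem_antidiagonal.mp hx
  have hmem : p.coeff x.1 * q.coeff x.2 ∈ J ^ ((a - x.1) + (b - x.2)) := by
    rw [pow_add]; exact Ideal.mul_mem_mul (hp x.1) (hq x.2)
  exact Ideal.pow_le_pow_right (by omega) hmem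

lemma span_X_sup_map_C_le_coeffPowIdeal_one (J : Ideal A) :
    Ideal.span {X} ⊔ J.map C ≤ coeffPowIdeal J 1 := by
  refine sup_le ?_ (Ideal.map_le_iff_le_comap.mpr fun a ha k => ?_)
  · rw [Ideal.span_le, Set.singleton_subset_iff]
    intro k
    rcases eq_or_ne k 1 with rfl | hk
    · simp
    · simp [coeff_X, Ne.symm hk]
  · rcases eq_or_ne k 0 with rfl | hk
    · simpa using ha
    · simp [coeff_C, hk]

lemma span_X_sup_map_C_pow_le_coeffPowIdeal (J : Ideal A) (m : ℕ) :
    (Ideal.span {X} ⊔ J.map C) ^ m ≤ coeffPowIdeal J m := by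
  induction m with
  | zero => simp [Ideal.one_eq_top, coeffPowIdeal]
  | succ m ih =>
    rw [pow_succ]
    exact (Ideal.mul_mono ih (span_X_sup_map_C_le_coeffPowIdeal_one J)).trans
      (coeffPowIdeal_mul_le J m 1)

end Polynomial

lemma Derivation.map_mem_pow_of_mem_pow_succ {R A : Type*} [CommSemiring R] [CommRing A]
    [Algebra R A] (D : Derivation R A A) (J : Ideal A) {m : ℕ} {f : A}
    (hf : f ∈ J ^ (m + 1)) : D f ∈ J ^ m := by
  induction m generalizing f with
  | zero => simp [Ideal.one_eq_top]
  | succ m ih =>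
    rw [pow_succ] at hf
    refine Submodule.mul_induction_on hf (fun a ha b hb => ?_) (fun x y hx hy => ?_)
    · rw [D.leibniz, smul_eq_mul, smul_eq_mul, pow_succ]
      exact add_mem (Ideal.mul_mem_right _ _ ha) (mul_comm (D a) b ▸ Ideal.mul_mem_mul (ih ha) hb)
    · rw [map_add]; exact add_mem hx hy

lemma MvPolynomial.eq_C_of_isHomogeneous_zero {R σ : Type*} [CommSemiring R]
    {f : MvPolynomial σ R} (hf : f.IsHomogeneous 0) : f = C (coeff 0 f) :=
  totalDegree_eq_zero_iff_eq_C.mp ((totalDegree_zero_iff_isHomogeneous _).mpr hf)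

section Points

variable {K σ ι : Type*} [Field K]

lemma mem_irrel_iff {f : MvPolynomial σ K} : f ∈ irrel K σ ↔ constantCoeff f = 0 := by
  rw [irrel, ← Set.image_univ, mem_ideal_span_X_image, constantCoeff_eq]
  constructor
  · intro hf
    by_contra hc
    obtain ⟨i, -, hi⟩ := hf 0 (mem_support_iff.mpr hc)
    simp at hi
  · intro h0 u hu
    obtain ⟨i, hi⟩ := Finsupp.ne_iff.mp (show u ≠ 0 by rintro rfl; exact mem_support_iff.mp hu h0)
    exact ⟨i, Set.mem_univ i, hi⟩

lemma X_mem_irrel (i : σ) : (X i : MvPolynomial σ K) ∈ irrel K σ :=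
  Ideal.subset_span ⟨i, rfl⟩

lemma homVanishingIdeal_le_irrel (p : σ → K) : homVanishingIdeal p ≤ irrel K σ := by
  rw [homVanishingIdeal, Ideal.span_le]
  rintro F ⟨⟨d, hd⟩, hev⟩
  rw [SetLike.mem_coe, mem_irrel_iff]
  rcases eq_or_ne d 0 with rfl | hd0
  · rw [eq_C_of_isHomogeneous_zero hd] at hev ⊢
    simpa using hev
  · exact hd.coeff_eq_zero (by simpa using hd0.symm)

lemma symbPow_le_irrel_pow [Nonempty ι] (P : ι → σ → K) (m : ℕ) :
    symbPow P m ≤ irrel K σ ^ m :=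
  (iInf_le _ (Classical.arbitrary ι)).trans
    (Ideal.pow_right_mono (homVanishingIdeal_le_irrel _) m)

lemma pderiv_mem_symbPow {P : ι → σ → K} {m : ℕ} {f : MvPolynomial σ K}
    (hf : f ∈ symbPow P (m + 1)) (i : σ) : pderiv i f ∈ symbPow P m :=
  Ideal.mem_iInf.mpr fun j =>
    (pderiv i).map_mem_pow_of_mem_pow_succ _ (Ideal.mem_iInf.mp hf j)

attribute [local instance] MvPolynomial.gradedAlgebra

lemma homVanishingIdeal_isHomogeneous (p : σ → K) :
    (homVanishingIdeal p).IsHomogeneous (homogeneousSubmodule σ K) :=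
  Ideal.homogeneous_span _ _ fun _ ⟨⟨d, hd⟩, _⟩ => ⟨d, (mem_homogeneousSubmodule _ _).mpr hd⟩

lemma symbPow_isHomogeneous (P : ι → σ → K) (m : ℕ) :
    (symbPow P m).IsHomogeneous (homogeneousSubmodule σ K) :=
  Ideal.IsHomogeneous.iInf fun i => by
    induction m with
    | zero => rw [pow_zero, Ideal.one_eq_top]; exact Ideal.IsHomogeneous.top _
    | succ m ih => rw [pow_succ]; exact ih.mul (homVanishingIdeal_isHomogeneous (P i))

variable [CharZero K] [Fintype σ]

lemma le_irrel_mul_of_pderiv_mem {I J : Ideal (MvPolynomial σ K)}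
    (hI : I.IsHomogeneous (homogeneousSubmodule σ K)) (hIM : I ≤ irrel K σ)
    (hder : ∀ i, ∀ f ∈ I, pderiv i f ∈ J) : I ≤ irrel K σ * J := by
  classical
  intro f hf
  rw [← DirectSum.sum_support_decompose (homogeneousSubmodule σ K) f]
  refine sum_mem fun d _ => ?_
  set g := (DirectSum.decompose (homogeneousSubmodule σ K) f d : MvPolynomial σ K)
  have hgI : g ∈ I := hI d hf
  have hg : g.IsHomogeneous d := (mem_homogeneousSubmodule _ _).mp (SetLike.coe_mem _)
  rcases eq_or_ne d 0 with rfl | hd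
  · rw [eq_C_of_isHomogeneous_zero hg, ← constantCoeff_eq, mem_irrel_iff.mp (hIM hgI), C_0]
    exact zero_mem _
  · have euler : d • g ∈ irrel K σ * J := hg.sum_X_mul_pderiv ▸
      sum_mem fun i _ => Ideal.mul_mem_mul (X_mem_irrel i) (hder i g hgI)
    have hgd : g = C (d : K)⁻¹ * (d • g) := by
      rw [nsmul_eq_mul, ← map_natCast C, ← mul_assoc, ← C_mul,
        inv_mul_cancel₀ (Nat.cast_ne_zero.mpr hd), C_1, one_mul]
    rw [hgd]
    exact Ideal.mul_mem_left _ _ euler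

lemma symbPow_add_le [Nonempty ι] (P : ι → σ → K) (a s : ℕ) :
    symbPow P (a + s) ≤ irrel K σ ^ s * symbPow P a := by
  induction s with
  | zero => simp [Ideal.one_eq_top]
  | succ s ih =>
    have hstep : symbPow P (a + s + 1) ≤ irrel K σ * symbPow P (a + s) :=
      le_irrel_mul_of_pderiv_mem (symbPow_isHomogeneous P _)
        ((symbPow_le_irrel_pow P _).trans (Ideal.pow_le_self (by omega)))
        fun i _ hf => pderiv_mem_symbPow hf i
    calc symbPow P (a + (s + 1)) ≤ irrel K σ * (irrel K σ ^ s * symbPow P a) :=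
          hstep.trans (Ideal.mul_mono_right ih)
      _ = irrel K σ ^ (s + 1) * symbPow P a := by rw [← mul_assoc, ← pow_succ']

end Points

section Hyperplane

variable {K ι : Type*} [Field K] {m : ℕ}

lemma X_zero_mem_homVanishingIdeal {p : Fin (m + 1) → K} (hp : p 0 = 0) :
    (X 0 : MvPolynomial (Fin (m + 1)) K) ∈ homVanishingIdeal p :=
  Ideal.subset_span ⟨⟨1, isHomogeneous_X _ _⟩, by simp [hp]⟩

lemma map_finSuccEquiv_homVanishingIdeal_le {p : Fin (m + 1) → K} (hp : p 0 = 0) :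
    (homVanishingIdeal p).map (finSuccEquiv K m) ≤
      Ideal.span {Polynomial.X} ⊔ (homVanishingIdeal fun j : Fin m => p j.succ).map Polynomial.C := by
  rw [homVanishingIdeal, Ideal.map_span, Ideal.span_le]
  rintro _ ⟨G, ⟨⟨d, hd⟩, hev⟩, rfl⟩
  rw [SetLike.mem_coe, ← Polynomial.X_mul_divX_add (finSuccEquiv K m G)]
  refine add_mem (Ideal.mem_sup_left (Ideal.mul_mem_right _ _ (Ideal.subset_span rfl)))
    (Ideal.mem_sup_right (Ideal.mem_map_of_mem _ (Ideal.subset_span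
      ⟨⟨d, hd.finSuccEquiv_coeff_isHomogeneous 0 d (zero_add d)⟩, ?_⟩)))
  have hcons : Fin.cons 0 (fun j : Fin m => p j.succ) = p := by
    rw [← hp]; exact Fin.cons_self_tail p
  have h := eval_eq_eval_mv_eval' (fun j : Fin m => p j.succ) 0 G
  rw [hcons, hev, ← Polynomial.coeff_zero_eq_eval_zero, Polynomial.coeff_map] at h
  exact h.symm

lemma coeff_finSuccEquiv_mem_symbPow {P : ι → Fin (m + 1) → K} (hP : ∀ i, P i 0 = 0)
    {t : ℕ} {F : MvPolynomial (Fin (m + 1)) K} (hF : F ∈ symbPow P t) (k : ℕ) :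
    (finSuccEquiv K m F).coeff k ∈ symbPow (fun i (j : Fin m) => P i j.succ) (t - k) :=
  Ideal.mem_iInf.mpr fun i =>
    Polynomial.span_X_sup_map_C_pow_le_coeffPowIdeal _ t
      (Ideal.pow_right_mono (map_finSuccEquiv_homVanishingIdeal_le (hP i)) t
        (Ideal.map_pow (finSuccEquiv K m) _ t ▸ Ideal.mem_map_of_mem _ (Ideal.mem_iInf.mp hF i))) k

lemma finSuccEquiv_rename_succ {R : Type*} [CommSemiring R] (g : MvPolynomial (Fin m) R) :
    finSuccEquiv R m (rename Fin.succ g) = Polynomial.C g := by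
  induction g using MvPolynomial.induction_on with
  | C a => simp [finSuccEquiv_apply]
  | add p q hp hq => rw [map_add, map_add, hp, hq, map_add]
  | mul_X p j hp => rw [map_mul, map_mul, hp, rename_X, finSuccEquiv_X_succ, ← Polynomial.C_mul]

lemma sum_rename_coeff_finSuccEquiv_mul_X_zero_pow {R : Type*} [CommSemiring R]
    (F : MvPolynomial (Fin (m + 1)) R) :
    ∑ k ∈ (finSuccEquiv R m F).support, rename Fin.succ ((finSuccEquiv R m F).coeff k) * X 0 ^ k
      = F := by
  apply (finSuccEquiv R m).injective
  simp only [map_sum, map_mul, map_pow, finSuccEquiv_rename_succ, finSuccEquiv_X_zero]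
  exact (Polynomial.sum_C_mul_X_pow_eq _)

lemma map_rename_succ_irrel_le :
    (irrel K (Fin m)).map (rename Fin.succ) ≤ irrel K (Fin (m + 1)) := by
  rw [irrel, Ideal.map_span, Ideal.span_le]
  rintro _ ⟨_, ⟨j, rfl⟩, rfl⟩
  exact rename_X (R := K) Fin.succ j ▸ X_mem_irrel _

lemma map_rename_succ_symbPow_le (P : ι → Fin (m + 1) → K) (t : ℕ) :
    (symbPow (fun i (j : Fin m) => P i j.succ) t).map (rename Fin.succ) ≤ symbPow P t := by
  refine le_iInf fun i => (Ideal.map_mono (iInf_le _ i)).trans ?_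
  rw [Ideal.map_pow]
  refine Ideal.pow_right_mono ?_ t
  rw [homVanishingIdeal, Ideal.map_span, Ideal.span_le]
  rintro _ ⟨G, ⟨⟨d, hd⟩, hev⟩, rfl⟩
  exact Ideal.subset_span ⟨⟨d, hd.rename_isHomogeneous⟩, by rwa [eval_rename]⟩

lemma rename_succ_mul_X_zero_pow_mem {P : ι → Fin (m + 1) → K} (hP : ∀ i, P i 0 = 0)
    {a b c k : ℕ} (hck : c ≤ k) {G : MvPolynomial (Fin m) K}
    (hG : G ∈ irrel K (Fin m) ^ a * symbPow (fun i (j : Fin m) => P i j.succ) 1 ^ b) :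
    rename Fin.succ G * X 0 ^ k ∈ irrel K (Fin (m + 1)) ^ (a + (k - c)) * symbPow P 1 ^ (b + c) := by
  have hrG : rename Fin.succ G ∈ irrel K (Fin (m + 1)) ^ a * symbPow P 1 ^ b := by
    refine Ideal.mul_mono (Ideal.pow_right_mono map_rename_succ_irrel_le a)
      (Ideal.pow_right_mono (map_rename_succ_symbPow_le P 1) b) ?_
    rw [← Ideal.map_pow, ← Ideal.map_pow, ← Ideal.map_mul]
    exact Ideal.mem_map_of_mem _ hG
  have hX : (X 0 : MvPolynomial (Fin (m + 1)) K) ∈ symbPow P 1 :=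
    Ideal.mem_iInf.mpr fun i => (pow_one (homVanishingIdeal (P i))).symm ▸
      X_zero_mem_homVanishingIdeal (hP i)
  obtain ⟨j, rfl⟩ := Nat.exists_eq_add_of_le hck
  have hmem := Ideal.mul_mem_mul (Ideal.mul_mem_mul hrG (Ideal.pow_mem_pow (X_mem_irrel 0) j))
    (Ideal.pow_mem_pow hX c)
  convert hmem using 1 <;> simp only [Nat.add_sub_cancel_left, pow_add] <;> ring

end Hyperplane

theorem stmt13_general {K : Type*} [Field K] [CharZero K]
    {N n : ℕ} (hn : 1 ≤ n)
    (P : Fin n → (Fin (N + 2) → K))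
    (hinH : ∀ i, P i 0 = 0)
    (r : ℕ)
    (h : symbPow (fun i (j : Fin (N + 1)) => P i j.succ) (r * N) ≤
      irrel K (Fin (N + 1)) ^ (r * (N - 1)) *
        symbPow (fun i (j : Fin (N + 1)) => P i j.succ) 1 ^ r) :
    symbPow P (r * (N + 1)) ≤ irrel K (Fin (N + 2)) ^ (r * N) * symbPow P 1 ^ r := by
  have : Nonempty (Fin n) := ⟨⟨0, hn⟩⟩
  intro F hF
  rw [← sum_rename_coeff_finSuccEquiv_mul_X_zero_pow F]
  refine sum_mem fun k _ => ?_
  have hFk := coeff_finSuccEquiv_mem_symbPow hinH hF k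
  have hrN : r * (N + 1) = r * N + r := Nat.mul_succ r N
  rcases lt_or_ge k r with hk | hk
  · rw [show r * (N + 1) - k = r * N + (r - k) by omega] at hFk
    have hG := Ideal.mul_mono_right h (symbPow_add_le _ _ _ hFk)
    rw [← mul_assoc, ← pow_add] at hG
    refine Ideal.mul_mono_left (Ideal.pow_le_pow_right ?_)
      (rename_succ_mul_X_zero_pow_mem hinH k.zero_le hG)
    have hsub : r * (N - 1) = r * N - r := Nat.mul_sub_one r N
    omega
  · have hG : (finSuccEquiv K (N + 1) F).coeff k ∈ irrel K (Fin (N + 1)) ^ (r * (N + 1) - k) *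
        symbPow (fun i (j : Fin (N + 1)) => P i j.succ) 1 ^ 0 := by
      rw [pow_zero, mul_one]
      exact symbPow_le_irrel_pow _ _ hFk
    have hterm := rename_succ_mul_X_zero_pow_mem hinH hk hG
    rw [zero_add] at hterm
    exact Ideal.mul_mono_left (Ideal.pow_le_pow_right (by omega)) hterm

/-- Hyperplane section, char 0.  Points `P i` of `P^{N+1}` lie in the
hyperplane `x_0 = 0`; `fun i (j : Fin (N+1)) => P i j.succ` gives their coordinate
vectors as points of `P^N = H`.  If `I^{(rN)} ⊆ M^{r(N-1)} I^r` in `K[x_1,…,x_{N+1}]`,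
then `Î^{(r(N+1))} ⊆ M̂^{rN} Î^r` in `K[x_0,…,x_{N+1}]`. -/
theorem stmt13 {K : Type*} [Field K] [IsAlgClosed K] [CharZero K]
    {N n : ℕ} (hN : 1 ≤ N) (hn : 1 ≤ n)
    (P : Fin n → (Fin (N + 2) → K)) (hP : ProjectivelyDistinct P)
    (hinH : ∀ i, P i 0 = 0)
    (r : ℕ) (hr : 1 ≤ r)
    (h : symbPow (fun i (j : Fin (N + 1)) => P i j.succ) (r * N) ≤
      irrel K (Fin (N + 1)) ^ (r * (N - 1)) *
        symbPow (fun i (j : Fin (N + 1)) => P i j.succ) 1 ^ r) :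
    symbPow P (r * (N + 1)) ≤ irrel K (Fin (N + 2)) ^ (r * N) * symbPow P 1 ^ r :=
  stmt13_general hn P hinH r h
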